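/- Let $T$ be a tree on $n \ge 2$ vertices rooted at a vertex $v$, with height $h$. For each level $\ell$ with $1 \le \ell \le h-1$, let $L_\ell$ be a set of at most $q$ vertices of largest degree among vertices at distance $\ell$ from $v$ (taking all of them if there are at most $q$). Then $\operatorname{Z}_q(T) \le \deg(v) + \sum_{\ell=1}^{h-1} \sum_{a \in L_\ell} \max\{0, \deg(a) - 2\}$. -/

import Mathlib

open SimpleGraph

namespace ZqGame

variable {V : Type*}

/-- A blue vertex `v` forces the white vertex `w`, where only white vertices in
`Wallow` are taken into account (used for Rule 3, where play is restricted to the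
subgraph induced by the blue set together with the returned white components). -/
def ForceIn (G : SimpleGraph V) (B : Set V) (Wallow : Set V) (v w : V) : Prop :=
  v ∈ B ∧ w ∉ B ∧ w ∈ Wallow ∧ G.Adj v w ∧
    ∀ u, G.Adj v u → u ∉ B → u ∈ Wallow → u = w

/-- The standard color change rule: `v` is blue and `w` is its unique white neighbor. -/
def Force (G : SimpleGraph V) (B : Set V) (v w : V) : Prop :=
  ForceIn G B Set.univ v w

/-- The white connected component of `G - B` containing the white vertex `w`. -/
def WhiteComp (G : SimpleGraph V) (B : Set V) (w : V) : Set V :=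
  {x | Relation.ReflTransGen (fun a b => G.Adj a b ∧ a ∉ B ∧ b ∉ B) w x}

/-- `W` is a white component, i.e. a connected component of `G - B`. -/
def IsWhiteComp (G : SimpleGraph V) (B : Set V) (W : Set V) : Prop :=
  ∃ w, w ∉ B ∧ W = WhiteComp G B w

/-- An active vertex: a blue vertex with at least two white neighbors. -/
def Active (G : SimpleGraph V) (B : Set V) (a : V) : Prop :=
  a ∈ B ∧ ∃ w₁ w₂, w₁ ≠ w₂ ∧ G.Adj a w₁ ∧ G.Adj a w₂ ∧ w₁ ∉ B ∧ w₂ ∉ B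

end ZqGame

namespace ZqGame

variable {V : Type*}

/-- `Win G q B t` : in the `Z_q`-forcing game on `G` starting from blue set `B`,
Blue has a strategy spending at most `t` tokens that colors every vertex blue
against any (adversarial) play by White.
* `all` : every vertex is already blue.
* `rule1` : spend one token to color an arbitrary vertex blue.
* `rule2` : a blue vertex with exactly one white neighbor forces it, for free.
* `rule3` : Blue announces a collection `𝒲` of at least `q + 1` white components;
  for every nonempty sub-collection `𝒮` that White may return, Blue can perform a
  Rule 2 force (`vf 𝒮 → wf 𝒮`) on the subgraph induced by `B` together with `⋃ 𝒮`,
  and continue from the resulting position. -/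
inductive Win (G : SimpleGraph V) (q : ℕ) : Set V → ℕ → Prop
  | all (B : Set V) (t : ℕ) : (∀ v, v ∈ B) → Win G q B t
  | rule1 (B : Set V) (t : ℕ) (v : V) : Win G q (insert v B) t → Win G q B (t + 1)
  | rule2 (B : Set V) (t : ℕ) (v w : V) :
      Force G B v w → Win G q (insert w B) t → Win G q B t
  | rule3 (B : Set V) (t : ℕ) (𝒲 : Finset (Set V))
      (vf wf : Finset (Set V) → V) :
      (∀ W ∈ 𝒲, IsWhiteComp G B W) → q + 1 ≤ 𝒲.card →
      (∀ 𝒮 : Finset (Set V), 𝒮 ⊆ 𝒲 → 𝒮.Nonempty →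
        ForceIn G B (⋃₀ (𝒮 : Set (Set V))) (vf 𝒮) (wf 𝒮)) →
      (∀ 𝒮 : Finset (Set V), 𝒮 ⊆ 𝒲 → 𝒮.Nonempty →
        Win G q (insert (wf 𝒮) B) t) →
      Win G q B t

/-- `Z_q(G, B)` : the minimum number of additional tokens Blue must spend to win the
`Z_q`-forcing game on `G` starting from blue set `B`. -/
noncomputable def cost (G : SimpleGraph V) (q : ℕ) (B : Set V) : ℕ :=
  sInf {t | Win G q B t}

/-- `Z_q(G)` : the `Z_q`-forcing number of `G`. -/
noncomputable def Zq (G : SimpleGraph V) (q : ℕ) : ℕ := cost G q ∅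

end ZqGame

/-!
Blue colours the root `v` and keeps the blue set `B` closed under taking parents, so the white
neighbours of a blue vertex are its white children. Call a vertex unfinished if it has a white
child, and let its excess be its number of children minus one. Blue can win from `B` with
`budget B` tokens, the sum over all levels of the largest total excess of `q` unfinished vertices
of that level. A blue vertex with one white neighbour forces it for free. If at most `q` blue
vertices have two or more white neighbours, let `a` be one of minimal level: every unfinished
vertex of its level is such a vertex, so that level is charged in full. Blue colours all white
children of `a` but one, which `a` then forces; this costs at most the excess of `a`, and the
charge of the level drops by that much. Otherwise Blue applies Rule 3 to the subtrees below one white child of each such vertex;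
whichever White returns, the parent of one of them has a single white neighbour in their union.
For `B = {v}` the root has excess `deg v - 1`, any other vertex at most `deg - 2`, and at each
level `L ℓ` carries the largest such values.
-/

open Finset

namespace Finset

variable {α : Type*}

noncomputable def topSum (s : Finset α) (q : ℕ) (f : α → ℕ) : ℕ :=
  (s.powerset.filter fun t => t.card ≤ q).sup fun t => ∑ x ∈ t, f x

variable {s s' t : Finset α} {q : ℕ} {f g : α → ℕ}

theorem sum_le_topSum (hts : t ⊆ s) (htq : t.card ≤ q) : ∑ x ∈ t, f x ≤ s.topSum q f :=
  le_sup (f := fun t => ∑ x ∈ t, f x) (mem_filter.2 ⟨mem_powerset.2 hts, htq⟩)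

theorem topSum_le {c : ℕ} (h : ∀ t ⊆ s, t.card ≤ q → ∑ x ∈ t, f x ≤ c) : s.topSum q f ≤ c :=
  Finset.sup_le fun t ht => by
    rw [mem_filter, mem_powerset] at ht
    exact h t ht.1 ht.2

theorem topSum_le_topSum_of_subset (h : s ⊆ s') : s.topSum q f ≤ s'.topSum q f :=
  topSum_le fun _ hts htq => sum_le_topSum (hts.trans h) htq

theorem topSum_le_topSum (h : ∀ x ∈ s, f x ≤ g x) : s.topSum q f ≤ s.topSum q g :=
  topSum_le fun _ hts htq =>
    (sum_le_sum fun x hx => h x (hts hx)).trans (sum_le_topSum hts htq)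

theorem topSum_le_sum : s.topSum q f ≤ ∑ x ∈ s, f x :=
  topSum_le fun _ hts _ => sum_le_sum_of_subset hts

theorem topSum_eq_sum (hs : s.card ≤ q) : s.topSum q f = ∑ x ∈ s, f x :=
  topSum_le_sum.antisymm (sum_le_topSum subset_rfl hs)

theorem sum_le_sum_of_card_le_of_forall_le [DecidableEq α] {L : Finset α}
    (hcard : s.card ≤ L.card) (hdom : ∀ b ∈ s, b ∉ L → ∀ a ∈ L, f b ≤ f a) :
    ∑ x ∈ s, f x ≤ ∑ x ∈ L, f x := by
  have hcard' : (s \ L).card ≤ (L \ s).card := by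
    have := card_sdiff_add_card_inter s L
    have := card_sdiff_add_card_inter L s
    rw [inter_comm] at this
    omega
  -- `s \ L` is exchanged for equally many elements `T` of `L \ s`, each at least as large.
  obtain ⟨T, hTL, hTcard⟩ := exists_subset_card_eq hcard'
  have hexchange : ∑ x ∈ s \ L, f x ≤ ∑ x ∈ T, f x := by
    rcases T.eq_empty_or_nonempty with rfl | hT
    · simp [card_eq_zero.1 hTcard.symm]
    obtain ⟨a, ha, hmin⟩ := T.exists_min_image f hT
    calc ∑ x ∈ s \ L, f x ≤ (s \ L).card • f a := sum_le_card_nsmul _ _ _ fun b hb =>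
          hdom b (mem_sdiff.1 hb).1 (mem_sdiff.1 hb).2 a (mem_sdiff.1 (hTL ha)).1
      _ = T.card • f a := by rw [hTcard]
      _ ≤ ∑ x ∈ T, f x := card_nsmul_le_sum _ _ _ hmin
  have hdisj : Disjoint (s ∩ L) T :=
    disjoint_left.2 fun x hx hxT => (mem_sdiff.1 (hTL hxT)).2 (mem_inter.1 hx).1
  calc ∑ x ∈ s, f x = ∑ x ∈ s ∩ L, f x + ∑ x ∈ s \ L, f x := (sum_inter_add_sum_sdiff s L f).symm
    _ ≤ ∑ x ∈ s ∩ L, f x + ∑ x ∈ T, f x := by gcongr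
    _ = ∑ x ∈ (s ∩ L) ∪ T, f x := (sum_union hdisj).symm
    _ ≤ ∑ x ∈ L, f x :=
      sum_le_sum_of_subset (union_subset inter_subset_right fun x hx => (mem_sdiff.1 (hTL hx)).1)

theorem topSum_le_sum_of_forall_le [DecidableEq α] {L : Finset α} (hcard : min q s.card ≤ L.card)
    (hdom : ∀ b ∈ s, b ∉ L → ∀ a ∈ L, f b ≤ f a) : s.topSum q f ≤ ∑ x ∈ L, f x :=
  topSum_le fun _ hts htq => sum_le_sum_of_card_le_of_forall_le
    ((le_min htq (card_le_card hts)).trans hcard) fun b hb => hdom b (hts hb)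

end Finset

namespace SimpleGraph

variable {V : Type*} {G : SimpleGraph V} {v p p' x y c c' : V}

def IsChild (G : SimpleGraph V) (v p x : V) : Prop :=
  G.Adj p x ∧ G.dist v x = G.dist v p + 1

theorem IsTree.isChild_or_isChild_of_adj (hT : G.IsTree) (v : V) (hadj : G.Adj x y) :
    G.IsChild v x y ∨ G.IsChild v y x := by
  rcases hT.dist_eq_dist_add_one_of_adj v hadj with h | h
  · exact .inr ⟨hadj.symm, h⟩
  · exact .inl ⟨hadj, h⟩

theorem Connected.exists_isChild_of_ne (hG : G.Connected) (hx : x ≠ v) : ∃ p, G.IsChild v p x := by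
  obtain ⟨w, hw⟩ := hG.exists_walk_length_eq_dist x v
  obtain ⟨p, hadj, w', rfl⟩ := Walk.exists_eq_cons_of_ne hx w
  refine ⟨p, hadj.symm, ?_⟩
  have hpv : G.dist v p ≤ w'.length := dist_comm (G := G) ▸ dist_le w'
  have hxv : G.dist v x ≠ 0 := fun h => hx ((hG.dist_eq_zero_iff.1 h).symm)
  rw [Walk.length_cons, dist_comm] at hw
  rcases hadj.symm.diff_dist_adj (u := v) with h | h | h <;> omega

theorem dist_le_of_mem_support {u w : V} (p : G.Walk u w) (hy : y ∈ p.support) :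
    G.dist u y ≤ p.length := by
  classical
  exact (dist_le _).trans (p.length_takeUntil_le_length hy)

theorem IsTree.mem_support_of_isChild (hT : G.IsTree) {q : G.Walk v x} (hq : q.IsPath)
    (h : G.IsChild v p x) : p ∈ q.support := by
  obtain ⟨r, hr, hrlen⟩ := hT.connected.exists_path_of_dist v p
  by_contra hp
  have := dist_le_of_mem_support r
    (hT.isAcyclic.mem_support_of_ne_mem_support_of_adj_of_isPath hr hq h.1 hp)
  have := h.2
  omega

theorem IsTree.eq_of_isChild (hT : G.IsTree) (h : G.IsChild v p x) (h' : G.IsChild v p' x) :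
    p = p' := by
  obtain ⟨q, hq, -⟩ := hT.connected.exists_path_of_dist v x
  exact (hT.isAcyclic.eq_penultimate_of_adj_end hq h.1.symm (hT.mem_support_of_isChild hq h)).trans
    (hT.isAcyclic.eq_penultimate_of_adj_end hq h'.1.symm (hT.mem_support_of_isChild hq h')).symm

section Children

variable [Fintype V]

open Classical in
noncomputable def children (G : SimpleGraph V) (v p : V) : Finset V :=
  univ.filter (G.IsChild v p)

theorem mem_children : x ∈ G.children v p ↔ G.IsChild v p x := by
  simp [children]

theorem card_children_le_degree [DecidableRel G.Adj] : (G.children v p).card ≤ G.degree p := by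
  rw [← card_neighborFinset_eq_degree]
  exact card_le_card fun x hx => (mem_neighborFinset G p x).2 (mem_children.1 hx).1

theorem Connected.card_children_lt_degree [DecidableRel G.Adj] (hG : G.Connected) (hp : p ≠ v) :
    (G.children v p).card < G.degree p := by
  obtain ⟨p', hp'⟩ := hG.exists_isChild_of_ne hp
  rw [← card_neighborFinset_eq_degree]
  refine card_lt_card ((ssubset_iff_of_subset fun x hx => ?_).2 ⟨p', ?_, fun h => ?_⟩)
  · exact (mem_neighborFinset G p x).2 (mem_children.1 hx).1
  · exact (mem_neighborFinset G p p').2 hp'.1.symm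
  · have := (mem_children.1 h).2
    have := hp'.2
    omega

theorem dist_lt_card (G : SimpleGraph V) (v x : V) : G.dist v x < Fintype.card V := by
  by_cases hr : G.Reachable v x
  · obtain ⟨p, hp, hlen⟩ := hr.exists_path_of_dist
    exact hlen ▸ hp.length_lt
  · rw [dist_eq_zero_of_not_reachable hr]
    exact Fintype.card_pos_iff.2 ⟨v⟩

end Children

def IsAncestorClosed (G : SimpleGraph V) (v : V) (B : Set V) : Prop :=
  v ∈ B ∧ ∀ ⦃p x⦄, G.IsChild v p x → x ∈ B → p ∈ B

theorem isAncestorClosed_singleton (G : SimpleGraph V) (v : V) : G.IsAncestorClosed v {v} :=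
  ⟨rfl, fun _ _ h hx => by
    have := h.2
    rw [Set.mem_singleton_iff.1 hx, dist_self] at this
    omega⟩

namespace IsAncestorClosed

variable {B : Set V}

theorem isChild_of_adj (hB : G.IsAncestorClosed v B) (hT : G.IsTree) (hp : p ∈ B) (hx : x ∉ B)
    (hadj : G.Adj p x) : G.IsChild v p x :=
  (hT.isChild_or_isChild_of_adj v hadj).resolve_right fun h => hx (hB.2 h hp)

theorem union (hB : G.IsAncestorClosed v B) (hT : G.IsTree) {W : Set V}
    (hW : ∀ x ∈ W, ∃ p ∈ B, G.IsChild v p x) : G.IsAncestorClosed v (B ∪ W) := by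
  refine ⟨.inl hB.1, fun p x hpx hx => .inl ?_⟩
  rcases hx with hx | hx
  · exact hB.2 hpx hx
  · obtain ⟨p', hp', hp'x⟩ := hW x hx
    exact hT.eq_of_isChild hpx hp'x ▸ hp'

theorem insert (hB : G.IsAncestorClosed v B) (hT : G.IsTree) (hp : p ∈ B) (hc : G.IsChild v p c) :
    G.IsAncestorClosed v (insert c B) := by
  rw [← Set.union_singleton]
  exact hB.union hT fun x hx => ⟨p, hp, Set.mem_singleton_iff.1 hx ▸ hc⟩

theorem exists_isChild_notMem (hB : G.IsAncestorClosed v B) (hG : G.Connected) (hx : x ∉ B) :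
    ∃ p ∈ B, ∃ c ∉ B, G.IsChild v p c ∧ G.dist v p < G.dist v x := by
  induction hn : G.dist v x using Nat.strong_induction_on generalizing x with
  | _ n ih =>
  obtain ⟨p, hp⟩ : ∃ p, G.IsChild v p x := hG.exists_isChild_of_ne fun h => hx (h ▸ hB.1)
  have hpx := hp.2
  by_cases hpB : p ∈ B
  · exact ⟨p, hpB, x, hx, hp, by omega⟩
  · obtain ⟨p', hp', c, hc, hp'c, hlt⟩ := ih _ (by omega) hpB rfl
    exact ⟨p', hp', c, hc, hp'c, by omega⟩

end IsAncestorClosed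

open ZqGame

/-- A white component entered from a blue parent lies in the subtree below its entry point. -/
theorem IsTree.reflTransGen_isChild_of_mem_whiteComp (hT : G.IsTree) {B : Set V} (hp : p ∈ B)
    (hc : G.IsChild v p c) (hx : x ∈ WhiteComp G B c) :
    Relation.ReflTransGen (fun y z => G.IsChild v y z ∧ y ∉ B) c x := by
  induction hx with
  | refl => exact .refl
  | @tail b y _ hby ih =>
    obtain ⟨hadj, hb, hy⟩ := hby
    rcases hT.isChild_or_isChild_of_adj v hadj with hchild | hchild
    · exact ih.tail ⟨hchild, hb⟩
    · rcases ih.cases_tail with rfl | ⟨y', hy', hy'b, -⟩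
      · exact absurd (hT.eq_of_isChild hchild hc ▸ hp) hy
      · exact hT.eq_of_isChild hy'b hchild ▸ hy'

theorem IsTree.eq_of_mem_whiteComp (hT : G.IsTree) {B : Set V} (hp : p ∈ B)
    (hc : G.IsChild v p c) (hp' : p' ∈ B) (hc' : G.IsChild v p' c')
    (hmem : c' ∈ WhiteComp G B c) : c' = c := by
  rcases (hT.reflTransGen_isChild_of_mem_whiteComp hp hc hmem).cases_tail with h | ⟨y, -, hyc', hy⟩
  · exact h
  · exact absurd (hT.eq_of_isChild hyc' hc' ▸ hp') hy

end SimpleGraph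

namespace ZqGame

open SimpleGraph

section Game

variable {V : Type*} {G : SimpleGraph V} {q t : ℕ} {B : Set V}

theorem Win.mono (hw : Win G q B t) {t' : ℕ} (ht : t ≤ t') : Win G q B t' := by
  induction hw generalizing t' with
  | all B t hB => exact .all B t' hB
  | rule1 B t w _ ih =>
    obtain ⟨s, rfl⟩ : ∃ s, t' = s + 1 := ⟨t' - 1, by omega⟩
    exact .rule1 B s w (ih (by omega))
  | rule2 B t u w hf _ ih => exact .rule2 B t' u w hf (ih ht)
  | rule3 B t 𝒲 vf wf hcomp hcard hforce _ ih =>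
    exact .rule3 B t' 𝒲 vf wf hcomp hcard hforce fun 𝒮 h𝒮 hne => ih 𝒮 h𝒮 hne ht

theorem Win.of_union [DecidableEq V] (S : Finset V) (hw : Win G q (B ∪ S) t) :
    Win G q B (t + S.card) := by
  induction S using Finset.induction_on generalizing B t with
  | empty => simpa using hw
  | @insert a S ha ih =>
    rw [Finset.coe_insert, Set.union_insert] at hw
    rw [Finset.card_insert_of_notMem ha, ← add_assoc, add_right_comm]
    exact ih (.rule1 _ _ a hw)

/-- Blue colours all white neighbours of `a` but `c` with tokens; then `a` forces `c`. -/
theorem Win.of_union_white_neighbors [DecidableEq V] {a c : V} {W : Finset V} (ha : a ∈ B)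
    (hc : c ∈ W) (hW : ∀ x, x ∈ W ↔ G.Adj a x ∧ x ∉ B) (hw : Win G q (B ∪ W) t) :
    Win G q B (t + (W.card - 1)) := by
  rw [← Finset.card_erase_of_mem hc]
  refine .of_union _ (.rule2 _ _ a c ⟨.inl ha, ?_, trivial, ((hW c).1 hc).1, ?_⟩ ?_)
  · rintro (h | h)
    · exact ((hW c).1 hc).2 h
    · exact Finset.notMem_erase c W h
  · intro u hau hu _
    by_contra huc
    exact hu (.inr (Finset.mem_erase.2 ⟨huc, (hW u).2 ⟨hau, fun h => hu (.inl h)⟩⟩))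
  · convert hw using 2
    ext u
    by_cases huc : u = c <;> simp [huc, hc]

/-- Rule 3 played on the white components of the vertices `c a`: whichever of them White
returns, the vertex `a` owning one of them has a unique white neighbour in their union. -/
theorem Win.of_separated_white_neighbors (A : Finset V) (c : V → V)
    (hA : ∀ a ∈ A, a ∈ B ∧ G.Adj a (c a) ∧ c a ∉ B) (hq : q < A.card)
    (hsep : ∀ a ∈ A, ∀ a' ∈ A, ∀ u, G.Adj a u → u ∉ B → u ∈ WhiteComp G B (c a') →
      a = a' ∧ u = c a')
    (hnext : ∀ a ∈ A, Win G q (insert (c a) B) t) : Win G q B t := by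
  classical
  set 𝒲 := A.image fun a => WhiteComp G B (c a)
  have hinj : Set.InjOn (fun a => WhiteComp G B (c a)) A := by
    intro a ha a' ha' h
    have hmem : c a ∈ WhiteComp G B (c a') := by
      simp only at h
      exact h ▸ .refl
    exact (hsep a ha a' ha' (c a) (hA a ha).2.1 (hA a ha).2.2 hmem).1
  have hpick : ∀ 𝒮 ⊆ 𝒲, 𝒮.Nonempty → ∃ a ∈ A, WhiteComp G B (c a) ∈ 𝒮 := by
    rintro 𝒮 h𝒮 ⟨W, hW⟩
    obtain ⟨a, ha, rfl⟩ := Finset.mem_image.1 (h𝒮 hW)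
    exact ⟨a, ha, hW⟩
  obtain ⟨a₀, -⟩ : A.Nonempty := Finset.card_pos.1 (by omega)
  have : Nonempty V := ⟨a₀⟩
  choose! f hfA hfS using hpick
  refine .rule3 B t 𝒲 f (fun 𝒮 => c (f 𝒮)) ?_ ?_ ?_ fun 𝒮 h𝒮 hne => hnext _ (hfA 𝒮 h𝒮 hne)
  · intro W hW
    obtain ⟨a, ha, rfl⟩ := Finset.mem_image.1 hW
    exact ⟨c a, (hA a ha).2.2, rfl⟩
  · rwa [Finset.card_image_of_injOn hinj]
  · intro 𝒮 h𝒮 hne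
    have ha := hA _ (hfA 𝒮 h𝒮 hne)
    refine ⟨ha.1, ha.2.2, Set.mem_sUnion.2 ⟨_, hfS 𝒮 h𝒮 hne, .refl⟩, ha.2.1, ?_⟩
    intro u hau hu hmem
    obtain ⟨W, hW, huW⟩ := Set.mem_sUnion.1 hmem
    obtain ⟨a', ha', rfl⟩ := Finset.mem_image.1 (h𝒮 hW)
    obtain ⟨rfl, rfl⟩ := hsep _ (hfA 𝒮 h𝒮 hne) a' ha' u hau hu huW
    rfl

theorem active_of_forall_not_force (hnf : ∀ u w, ¬Force G B u w) (hu : u ∈ B) (hadj : G.Adj u w)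
    (hw : w ∉ B) : Active G B u := by
  by_contra hna
  refine hnf u w ⟨hu, hw, trivial, hadj, fun w' hadj' hw' _ => ?_⟩
  by_contra hne
  exact hna ⟨hu, w', w, hne, hadj', hadj, hw', hw⟩

end Game

end ZqGame

namespace ZqGame

open SimpleGraph

section Budget

variable {V : Type*} [Fintype V] {G : SimpleGraph V} {v a x : V} {q : ℕ} {B B' : Set V}

noncomputable def excess (G : SimpleGraph V) (v x : V) : ℕ := (G.children v x).card - 1

open Classical in
noncomputable def unfinished (G : SimpleGraph V) (v : V) (B : Set V) (ℓ : ℕ) : Finset V :=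
  univ.filter fun p => G.dist v p = ℓ ∧ ∃ x, G.IsChild v p x ∧ x ∉ B

noncomputable def budget (G : SimpleGraph V) (v : V) (q : ℕ) (B : Set V) : ℕ :=
  ∑ ℓ ∈ range (Fintype.card V), (unfinished G v B ℓ).topSum q (excess G v)

theorem mem_unfinished {ℓ : ℕ} :
    x ∈ unfinished G v B ℓ ↔ G.dist v x = ℓ ∧ ∃ y, G.IsChild v x y ∧ y ∉ B := by
  simp [unfinished]

theorem unfinished_anti (h : B ⊆ B') {ℓ : ℕ} : unfinished G v B' ℓ ⊆ unfinished G v B ℓ := by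
  intro p hp
  obtain ⟨hpℓ, y, hpy, hy⟩ := mem_unfinished.1 hp
  exact mem_unfinished.2 ⟨hpℓ, y, hpy, fun hyB => hy (h hyB)⟩

theorem budget_anti (h : B ⊆ B') : budget G v q B' ≤ budget G v q B :=
  sum_le_sum fun _ _ => topSum_le_topSum_of_subset (unfinished_anti h)

theorem budget_add_excess_le (hBB' : B ⊆ B') (ha : a ∈ unfinished G v B (G.dist v a))
    (hq : (unfinished G v B (G.dist v a)).card ≤ q) (hfin : ∀ x, G.IsChild v a x → x ∈ B') :
    budget G v q B' + excess G v a ≤ budget G v q B := by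
  classical
  have hℓ : G.dist v a ∈ range (Fintype.card V) := mem_range.2 (dist_lt_card G v a)
  have ha' : a ∉ unfinished G v B' (G.dist v a) := fun h => by
    obtain ⟨-, y, hay, hy⟩ := mem_unfinished.1 h
    exact hy (hfin y hay)
  have hlevel : (unfinished G v B' (G.dist v a)).topSum q (excess G v) + excess G v a ≤
      (unfinished G v B (G.dist v a)).topSum q (excess G v) := by
    rw [topSum_eq_sum hq, ← sum_erase_add _ _ ha]
    gcongr
    exact (topSum_le_topSum_of_subset
      (subset_erase.2 ⟨unfinished_anti hBB', ha'⟩)).trans topSum_le_sum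
  rw [budget, budget, ← sum_erase_add _ _ hℓ, ← sum_erase_add _ _ hℓ, add_assoc]
  exact add_le_add (sum_le_sum fun _ _ => topSum_le_topSum_of_subset (unfinished_anti hBB')) hlevel

end Budget

section Strategy

variable {V : Type*} [Fintype V] {G : SimpleGraph V} {v u w : V} {q : ℕ} {B : Set V}

theorem win_insert_of_isChild (hT : G.IsTree) (hB : G.IsAncestorClosed v B)
    (hnext : ∀ B', G.IsAncestorClosed v B' → B ⊂ B' → Win G q B' (budget G v q B'))
    {p c : V} (hp : p ∈ B) (hc : G.IsChild v p c) (hcB : c ∉ B) :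
    Win G q (insert c B) (budget G v q B) :=
  (hnext _ (hB.insert hT hp hc) (Set.ssubset_insert hcB)).mono
    (budget_anti (Set.subset_insert c B))

open Classical in
noncomputable def activeFinset (G : SimpleGraph V) (B : Set V) : Finset V :=
  univ.filter (Active G B)

theorem mem_activeFinset : u ∈ activeFinset G B ↔ Active G B u := by
  simp [activeFinset]

theorem activeFinset_nonempty (hG : G.Connected) (hB : G.IsAncestorClosed v B)
    (hnf : ∀ u w, ¬Force G B u w) {x : V} (hx : x ∉ B) : (activeFinset G B).Nonempty := by
  obtain ⟨p, hp, c, hc, hpc, -⟩ := hB.exists_isChild_notMem hG hx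
  exact ⟨p, mem_activeFinset.2 (active_of_forall_not_force hnf hp hpc.1 hc)⟩

theorem unfinished_subset_activeFinset (hG : G.Connected) (hB : G.IsAncestorClosed v B)
    (hnf : ∀ u w, ¬Force G B u w) {a : V} (hmin : ∀ b ∈ activeFinset G B, G.dist v a ≤ G.dist v b) :
    unfinished G v B (G.dist v a) ⊆ activeFinset G B := by
  intro p hp
  obtain ⟨hpa, x, hpx, hx⟩ := mem_unfinished.1 hp
  by_cases hpB : p ∈ B
  · exact mem_activeFinset.2 (active_of_forall_not_force hnf hpB hpx.1 hx)
  · -- a blue ancestor of `p` with a white child is active and lies below the level of `a`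
    obtain ⟨p', hp', c, hc, hp'c, hlt⟩ := hB.exists_isChild_notMem hG hpB
    have := hmin p' (mem_activeFinset.2 (active_of_forall_not_force hnf hp' hp'c.1 hc))
    omega

theorem win_of_card_activeFinset_le (hT : G.IsTree) (hB : G.IsAncestorClosed v B)
    (hnext : ∀ B', G.IsAncestorClosed v B' → B ⊂ B' → Win G q B' (budget G v q B'))
    (hnf : ∀ u w, ¬Force G B u w) (hA : (activeFinset G B).Nonempty)
    (hq : (activeFinset G B).card ≤ q) : Win G q B (budget G v q B) := by
  classical
  obtain ⟨a, haA, hmin⟩ := (activeFinset G B).exists_min_image (G.dist v) hA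
  obtain ⟨haB, c, -, -, hac, -, hcB, -⟩ := mem_activeFinset.1 haA
  set W := (G.children v a).filter (· ∉ B)
  have hW : ∀ x, x ∈ W ↔ G.Adj a x ∧ x ∉ B := fun x => by
    simp only [W, mem_filter, mem_children]
    exact ⟨fun h => ⟨h.1.1, h.2⟩, fun h => ⟨hB.isChild_of_adj hT haB h.2 h.1, h.2⟩⟩
  have hcW : c ∈ W := (hW c).2 ⟨hac, hcB⟩
  have hBW : G.IsAncestorClosed v (B ∪ W) :=
    hB.union hT fun x hx => ⟨a, haB, mem_children.1 (mem_filter.1 hx).1⟩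
  have hlevel := unfinished_subset_activeFinset hT.connected hB hnf hmin
  have hfin : ∀ x, G.IsChild v a x → x ∈ B ∪ W := fun x hx => by
    by_cases hxB : x ∈ B
    · exact .inl hxB
    · exact .inr (mem_filter.2 ⟨mem_children.2 hx, hxB⟩)
  have hdrop : budget G v q (B ∪ W) + (W.card - 1) ≤ budget G v q B :=
    calc budget G v q (B ∪ W) + (W.card - 1) ≤ budget G v q (B ∪ W) + excess G v a :=
          Nat.add_le_add_left (Nat.sub_le_sub_right (card_filter_le _ _) 1) _
      _ ≤ budget G v q B := budget_add_excess_le Set.subset_union_left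
          (mem_unfinished.2 ⟨rfl, c, hB.isChild_of_adj hT haB hcB hac, hcB⟩)
          ((card_le_card hlevel).trans hq) hfin
  have hBBW : B ⊂ B ∪ W := (Set.ssubset_iff_of_subset Set.subset_union_left).2 ⟨c, .inr hcW, hcB⟩
  exact (Win.of_union_white_neighbors haB hcW hW (hnext _ hBW hBBW)).mono hdrop

theorem win_of_lt_card_activeFinset (hT : G.IsTree) (hB : G.IsAncestorClosed v B)
    (hnext : ∀ B', G.IsAncestorClosed v B' → B ⊂ B' → Win G q B' (budget G v q B'))
    (hq : q < (activeFinset G B).card) : Win G q B (budget G v q B) := by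
  have hwhite : ∀ a ∈ activeFinset G B, ∃ c, G.Adj a c ∧ c ∉ B := fun a ha => by
    obtain ⟨-, c, -, -, hac, -, hcB, -⟩ := mem_activeFinset.1 ha
    exact ⟨c, hac, hcB⟩
  choose! c hc using hwhite
  have hAB : ∀ a ∈ activeFinset G B, a ∈ B := fun a ha => (mem_activeFinset.1 ha).1
  have hchild : ∀ a ∈ activeFinset G B, G.IsChild v a (c a) := fun a ha =>
    hB.isChild_of_adj hT (hAB a ha) (hc a ha).2 (hc a ha).1
  refine .of_separated_white_neighbors (activeFinset G B) c
    (fun a ha => ⟨hAB a ha, hc a ha⟩) hq ?_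
    fun a ha => win_insert_of_isChild hT hB hnext (hAB a ha) (hchild a ha) (hc a ha).2
  intro a ha a' ha' u hau hu hmem
  have hu_child := hB.isChild_of_adj hT (hAB a ha) hu hau
  obtain rfl := hT.eq_of_mem_whiteComp (hAB a' ha') (hchild a' ha') (hAB a ha) hu_child hmem
  exact ⟨hT.eq_of_isChild hu_child (hchild a' ha'), rfl⟩

theorem win_budget (hT : G.IsTree) (q : ℕ) (hB : G.IsAncestorClosed v B) :
    Win G q B (budget G v q B) := by
  induction hn : (Bᶜ).ncard using Nat.strong_induction_on generalizing B with
  | _ n ih =>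
  have hnext : ∀ B', G.IsAncestorClosed v B' → B ⊂ B' → Win G q B' (budget G v q B') :=
    fun B' hB' h => ih _ (hn ▸ Set.ncard_lt_ncard (compl_lt_compl_iff_lt.2 h)) hB' rfl
  by_cases hall : ∀ x, x ∈ B
  · exact .all _ _ hall
  by_cases hf : ∃ u w, Force G B u w
  · obtain ⟨u, w, huw⟩ := hf
    obtain ⟨hu, hw, -, hadj, -⟩ := id huw
    exact .rule2 _ _ u w huw
      (win_insert_of_isChild hT hB hnext hu (hB.isChild_of_adj hT hu hw hadj) hw)
  push Not at hall hf
  obtain ⟨x, hx⟩ := hall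
  rcases le_or_gt (activeFinset G B).card q with hq | hq
  · exact win_of_card_activeFinset_le hT hB hnext hf
      (activeFinset_nonempty hT.connected hB hf hx) hq
  · exact win_of_lt_card_activeFinset hT hB hnext hq

end Strategy

section Bound

variable {V : Type*} [Fintype V] {G : SimpleGraph V} {v : V} {q : ℕ} {B : Set V}

theorem unfinished_eq_empty {h ℓ : ℕ} (hh : ∀ u, G.dist v u ≤ h) (hℓ : h ≤ ℓ) :
    unfinished G v B ℓ = ∅ := by
  refine eq_empty_iff_forall_notMem.2 fun p hp => ?_
  obtain ⟨hpℓ, x, hpx, -⟩ := mem_unfinished.1 hp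
  have := hpx.2
  have := hh x
  omega

theorem topSum_unfinished_zero_le (hG : G.Connected) :
    (unfinished G v B 0).topSum q (excess G v) ≤ excess G v v := by
  refine topSum_le_sum.trans ((sum_le_sum_of_subset (t := {v}) fun p hp => ?_).trans_eq
    (sum_singleton _ v))
  exact mem_singleton.2 (hG.dist_eq_zero_iff.1 (mem_unfinished.1 hp).1).symm

theorem topSum_unfinished_le [DecidableRel G.Adj] (hG : G.Connected) {ℓ : ℕ} (hℓ : ℓ ≠ 0)
    {L : Finset V} (hLcard : L.card = min q (univ.filter fun u => G.dist v u = ℓ).card)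
    (hLmax : ∀ a ∈ L, ∀ b, G.dist v b = ℓ → b ∉ L → G.degree b ≤ G.degree a) :
    (unfinished G v B ℓ).topSum q (excess G v) ≤ ∑ a ∈ L, (G.degree a - 2) := by
  classical
  have hexcess : ∀ p ∈ unfinished G v B ℓ, excess G v p ≤ G.degree p - 2 := fun p hp => by
    have hpv : p ≠ v := fun h => hℓ (by simpa [h] using (mem_unfinished.1 hp).1.symm)
    have := hG.card_children_lt_degree hpv
    rw [excess]
    omega
  calc (unfinished G v B ℓ).topSum q (excess G v)
      ≤ (unfinished G v B ℓ).topSum q (fun a => G.degree a - 2) := topSum_le_topSum hexcess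
    _ ≤ (univ.filter fun u => G.dist v u = ℓ).topSum q (fun a => G.degree a - 2) :=
        topSum_le_topSum_of_subset fun p hp => mem_filter.2 ⟨mem_univ p, (mem_unfinished.1 hp).1⟩
    _ ≤ ∑ a ∈ L, (G.degree a - 2) := topSum_le_sum_of_forall_le hLcard.ge fun b hb hbL a ha =>
        Nat.sub_le_sub_right (hLmax a ha b (mem_filter.1 hb).2 hbL) 2

theorem budget_le [DecidableRel G.Adj] (hG : G.Connected) {h : ℕ} (hh : ∀ u, G.dist v u ≤ h)
    {L : ℕ → Finset V} (hLcard : ∀ ℓ, (L ℓ).card = min q (univ.filter fun u => G.dist v u = ℓ).card)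
    (hLmax : ∀ ℓ, ∀ a ∈ L ℓ, ∀ b, G.dist v b = ℓ → b ∉ L ℓ → G.degree b ≤ G.degree a) :
    budget G v q B ≤ (G.degree v - 1) + ∑ ℓ ∈ Icc 1 (h - 1), ∑ a ∈ L ℓ, (G.degree a - 2) := by
  calc budget G v q B
      ≤ ∑ ℓ ∈ insert 0 (Icc 1 (h - 1)), (unfinished G v B ℓ).topSum q (excess G v) := by
        refine sum_le_sum_of_ne_zero fun ℓ _ hne => ?_
        have : ℓ < h := by
          by_contra! hℓ
          simp [unfinished_eq_empty hh hℓ, topSum] at hne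
        simp only [mem_insert, mem_Icc]
        omega
    _ ≤ (G.degree v - 1) + ∑ ℓ ∈ Icc 1 (h - 1), ∑ a ∈ L ℓ, (G.degree a - 2) := by
        rw [sum_insert (by simp)]
        gcongr with ℓ hℓ
        · exact (topSum_unfinished_zero_le hG).trans
            (Nat.sub_le_sub_right card_children_le_degree 1)
        · exact topSum_unfinished_le hG (by simp at hℓ; omega) (hLcard ℓ) (hLmax ℓ)

end Bound

end ZqGame

open SimpleGraph

theorem Zq_tree_upper_general {V : Type*} [Fintype V] (G : SimpleGraph V)
    [DecidableRel G.Adj] (hT : G.IsTree) (hcard : 2 ≤ Fintype.card V) (q : ℕ)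
    (v : V) (h : ℕ) (hh : h = Finset.univ.sup (fun u => G.dist v u))
    (L : ℕ → Finset V)
    (hLcard : ∀ ℓ, (L ℓ).card = min q (Finset.univ.filter (fun u => G.dist v u = ℓ)).card)
    (hLmax : ∀ ℓ, ∀ a ∈ L ℓ, ∀ b, G.dist v b = ℓ → b ∉ L ℓ → G.degree b ≤ G.degree a) :
    ZqGame.Zq G q ≤
      G.degree v + ∑ ℓ ∈ Finset.Icc 1 (h - 1), ∑ a ∈ L ℓ, (G.degree a - 2) := by
  have hwin : ZqGame.Win G q ∅ (ZqGame.budget G v q {v} + 1) :=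
    .rule1 _ _ v (by simpa using ZqGame.win_budget hT q (isAncestorClosed_singleton G v))
  have hZ : ZqGame.Zq G q ≤ ZqGame.budget G v q {v} + 1 := Nat.sInf_le hwin
  have hbudget := ZqGame.budget_le (B := {v}) hT.connected
    (fun u => hh ▸ Finset.le_sup (Finset.mem_univ u)) hLcard hLmax
  have : Nontrivial V := Fintype.one_lt_card_iff_nontrivial.1 hcard
  have hdeg := hT.connected.preconnected.degree_pos_of_nontrivial v
  omega

/-- Upper bound for trees: let `T` be a tree on at least `2` vertices rooted at `v`,
with height `h` (the maximum distance from `v`), and for each level `1 ≤ ℓ ≤ h - 1`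
let `L ℓ` be a set of (at most) `q` vertices of largest degree at distance `ℓ` from `v`
(all of them if the level has at most `q` vertices). Then
`Z_q(T) ≤ deg v + ∑_{ℓ=1}^{h-1} ∑_{a ∈ L ℓ} max 0 (deg a - 2)`. -/
theorem Zq_tree_upper {V : Type*} [Fintype V] [DecidableEq V] (G : SimpleGraph V)
    [DecidableRel G.Adj] (hT : G.IsTree) (hcard : 2 ≤ Fintype.card V) (q : ℕ)
    (v : V) (h : ℕ) (hh : h = Finset.univ.sup (fun u => G.dist v u))
    (L : ℕ → Finset V)
    (hLlevel : ∀ ℓ, ∀ a ∈ L ℓ, G.dist v a = ℓ)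
    (hLcard : ∀ ℓ, (L ℓ).card = min q (Finset.univ.filter (fun u => G.dist v u = ℓ)).card)
    (hLmax : ∀ ℓ, ∀ a ∈ L ℓ, ∀ b, G.dist v b = ℓ → b ∉ L ℓ → G.degree b ≤ G.degree a) :
    ZqGame.Zq G q ≤
      G.degree v + ∑ ℓ ∈ Finset.Icc 1 (h - 1), ∑ a ∈ L ℓ, (G.degree a - 2) :=
  Zq_tree_upper_general G hT hcard q v h hh L hLcard hLmax
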